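/- Let p ≥ 0, n = 2^p, and let r : {0, …, n−1} → {0, …, n−1} be any function (rows may repeat). Let A be the n×n matrix whose i-th row is the r(i)-th row of H(n), i.e. A_{i,j} = H(n)_{r(i), j}. If the bitwise XOR r(0) ⊕ r(1) ⊕ ⋯ ⊕ r(n−1) is nonzero, then perm A = 0. -/

import Mathlib

/-!
Every row of `H(2^p)` is a character of `(ℤ/2)^p`: `H(a, j ⊕ c) = H(a, c) H(a, j)`, and
symmetrically in the row index. Pick a bit `t` of `b = r(0) ⊕ ⋯ ⊕ r(n−1)` that is set and
permute the columns by `j ↦ j ⊕ 2^t`. This multiplies row `i` by `H(r(i), 2^t)`, and the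
product of these signs is `H(b, 2^t) = −1`. A column permutation does not change the
permanent, so `perm A = −perm A`.
-/

/-- The `2^p × 2^p` Sylvester matrix over `ℤ`: entry `(i,j)` is `(−1)^(i⊙j)`,
where `i⊙j` is the bitwise dot product (number of positions where both binary
expansions have a 1, i.e. the popcount of `i &&& j`). -/
def sylv (p : ℕ) : Matrix (Fin (2^p)) (Fin (2^p)) ℤ :=
  fun i j => (-1 : ℤ) ^ (((Finset.range p).filter
    (fun t => Nat.testBit (i.val &&& j.val) t)).card)

/-- The permanent of a square integer matrix: `perm A = Σ_σ ∏_i A_{i,σ(i)}`. -/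
def perm {n : ℕ} (A : Matrix (Fin n) (Fin n) ℤ) : ℤ :=
  ∑ σ : Equiv.Perm (Fin n), ∏ i, A i (σ i)

open Finset Matrix

lemma perm_submatrix_id_equiv {n : ℕ} (A : Matrix (Fin n) (Fin n) ℤ) (τ : Equiv.Perm (Fin n)) :
    perm (A.submatrix id τ) = perm A := by
  unfold perm
  exact Equiv.sum_comp (Equiv.mulLeft τ) (fun σ => ∏ i, A i (σ i))

lemma perm_diagonal_mul {n : ℕ} (c : Fin n → ℤ) (A : Matrix (Fin n) (Fin n) ℤ) :
    perm (diagonal c * A) = (∏ i, c i) * perm A := by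
  simp only [perm, diagonal_mul, prod_mul_distrib, mul_sum]

def bitSign (b : Bool) : ℤ := if b then -1 else 1

lemma bitSign_xor (a b : Bool) : bitSign (a ^^ b) = bitSign a * bitSign b := by
  cases a <;> cases b <;> simp [bitSign]

/-- `sylv` on all of `ℕ`, so that the XOR identities below need no range conditions. -/
def dotSign (p a j : ℕ) : ℤ :=
  (-1) ^ ((range p).filter (fun t => Nat.testBit (a &&& j) t)).card

lemma sylv_apply (p : ℕ) (i j : Fin (2^p)) : sylv p i j = dotSign p i j := rfl

lemma dotSign_eq_prod (p a j : ℕ) :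
    dotSign p a j = ∏ t ∈ range p, bitSign (Nat.testBit (a &&& j) t) := by
  simp only [dotSign, bitSign, prod_ite, prod_const, one_pow, mul_one]

lemma dotSign_comm (p a j : ℕ) : dotSign p a j = dotSign p j a := by
  rw [dotSign, Nat.land_comm, dotSign]

lemma dotSign_xor_left (p a b j : ℕ) :
    dotSign p (a ^^^ b) j = dotSign p a j * dotSign p b j := by
  simp only [dotSign_eq_prod, ← prod_mul_distrib, Nat.testBit_and, Nat.testBit_xor,
    Bool.and_xor_distrib_right, bitSign_xor]

lemma dotSign_xor_right (p a j c : ℕ) :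
    dotSign p a (j ^^^ c) = dotSign p a c * dotSign p a j := by
  rw [dotSign_comm, dotSign_xor_left, dotSign_comm p j, dotSign_comm p c, mul_comm]

lemma dotSign_zero_left (p j : ℕ) : dotSign p 0 j = 1 := by
  simp [dotSign]

lemma dotSign_two_pow_right {p t : ℕ} (ht : t < p) (a : ℕ) :
    dotSign p a (2 ^ t) = bitSign (Nat.testBit a t) := by
  rw [dotSign_eq_prod, ← mul_prod_erase _ _ (mem_range.2 ht), Nat.testBit_and,
    Nat.testBit_two_pow_self, Bool.and_true]
  convert mul_one _
  refine prod_eq_one fun s hs => ?_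
  rw [Nat.testBit_and, Nat.testBit_two_pow_of_ne (ne_of_mem_erase hs).symm, Bool.and_false]
  rfl

lemma prod_map_dotSign (p j : ℕ) (l : List ℕ) :
    (l.map (dotSign p · j)).prod = dotSign p (l.foldr (· ^^^ ·) 0) j := by
  induction l with
  | nil => simp [dotSign_zero_left]
  | cons a l ih => simp [ih, dotSign_xor_left]

lemma foldr_xor_lt_two_pow {p : ℕ} (l : List ℕ) (hl : ∀ x ∈ l, x < 2 ^ p) :
    l.foldr (· ^^^ ·) 0 < 2 ^ p := by
  induction l with
  | nil => exact Nat.two_pow_pos p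
  | cons x l ih =>
    exact Nat.xor_lt_two_pow (hl x (by simp)) (ih fun y hy => hl y (by simp [hy]))

def xorPerm {p : ℕ} (c : Fin (2^p)) : Equiv.Perm (Fin (2^p)) :=
  Function.Involutive.toPerm (fun j => ⟨j ^^^ c, Nat.xor_lt_two_pow j.isLt c.isLt⟩)
    fun _ => Fin.ext (xor_cancel_right _ _)

lemma sylv_xorPerm_right {p : ℕ} (a c j : Fin (2^p)) :
    sylv p a (xorPerm c j) = sylv p a c * sylv p a j :=
  dotSign_xor_right p a j c

lemma exists_sylv_eq_neg_one {p : ℕ} {b : Fin (2^p)} (hb : b ≠ 0) :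
    ∃ c : Fin (2^p), sylv p b c = -1 := by
  obtain ⟨t, ht⟩ := Nat.exists_testBit_of_ne_zero (Fin.val_ne_of_ne hb)
  have htp : t < p := (Nat.pow_lt_pow_iff_right (by norm_num)).1
    ((Nat.ge_two_pow_of_testBit ht).trans_lt b.isLt)
  refine ⟨⟨2 ^ t, Nat.pow_lt_pow_right (by norm_num) htp⟩, ?_⟩
  rw [sylv_apply, dotSign_two_pow_right htp, ht]
  rfl

/-- if `A` is the `n × n` matrix (`n = 2^p`) whose `i`-th row is the
`r(i)`-th row of the Sylvester matrix `H(n)` (rows may repeat) and the bitwise XOR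
`r(0) ⊕ r(1) ⊕ ⋯ ⊕ r(n−1)` is nonzero, then `perm A = 0`. -/
theorem stmt8 (p : ℕ) (r : Fin (2^p) → Fin (2^p))
    (A : Matrix (Fin (2^p)) (Fin (2^p)) ℤ)
    (hA : ∀ i j, A i j = sylv p (r i) j)
    (hxor : (List.ofFn (fun i => (r i).val)).foldr (· ^^^ ·) 0 ≠ 0) :
    perm A = 0 := by
  set l := List.ofFn (fun i => (r i).val)
  let b : Fin (2^p) := ⟨l.foldr (· ^^^ ·) 0, foldr_xor_lt_two_pow l (by simp [l])⟩
  obtain ⟨c, hc⟩ := exists_sylv_eq_neg_one (b := b) (Fin.ne_of_val_ne hxor)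
  have hsigns : ∏ i, sylv p (r i) c = -1 := by
    rw [← hc, sylv_apply, ← prod_map_dotSign, List.map_ofFn, List.prod_ofFn]
    rfl
  have hcols : A.submatrix id (xorPerm c) = diagonal (fun i => sylv p (r i) c) * A := by
    ext i j
    simp [hA, sylv_xorPerm_right]
  have hneg : perm A = -perm A := calc
    perm A = perm (A.submatrix id (xorPerm c)) := (perm_submatrix_id_equiv A _).symm
    _ = (∏ i, sylv p (r i) c) * perm A := by rw [hcols, perm_diagonal_mul]
    _ = -perm A := by rw [hsigns, neg_one_mul]
  linarith
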